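/- ℒ(RDFAwtl) ⊊ ℒ(nr-DFAwtl): the class of languages accepted by repetitive DFAwtls is strictly contained in the class accepted by non-returning (repetitive) deterministic finite automata with translucent letters; a witness is L₂ = { aⁿbⁿ : n ≥ 0 }, which is accepted by an nr-DFAwtl but by no NFAwtl (hence by no RDFAwtl, since ℒ(RDFAwtl) ⊆ ℒ(RNFAwtl) = ℒ(NFAwtl)). -/

import Mathlib

/-- A nondeterministic finite automaton with translucent letters (NFAwtl). -/
structure NFAwtl (Q α : Type) where
  τ : Q → Set α
  I : Set Q
  F : Set Q
  δ : Q → α → Set Q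
  tr : ∀ q a, a ∈ τ q → δ q a = ∅

namespace NFAwtl

variable {Q α : Type}

/-- One computation step of an NFAwtl: delete the leftmost non-translucent letter
and change state (the head returns to the left end). -/
def Step (A : NFAwtl Q α) : Q × List α → Q × List α → Prop := fun c c' =>
  ∃ u a v, c.2 = u ++ a :: v ∧ (∀ x ∈ u, x ∈ A.τ c.1) ∧ a ∉ A.τ c.1 ∧
    c'.1 ∈ A.δ c.1 a ∧ c'.2 = u ++ v

/-- Acceptance: from some initial state, reach a configuration whose remaining
letters are all translucent for a final state. -/
def Accepts (A : NFAwtl Q α) (w : List α) : Prop :=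
  ∃ q₀ ∈ A.I, ∃ q w', Relation.ReflTransGen A.Step (q₀, w) (q, w') ∧
    (∀ x ∈ w', x ∈ A.τ q) ∧ q ∈ A.F

def lang (A : NFAwtl Q α) : Set (List α) := { w | A.Accepts w }

/-- A DFAwtl: single initial state and at most one transition per state/letter. -/
def Deterministic (A : NFAwtl Q α) : Prop :=
  (∃ q₀, A.I = {q₀}) ∧ ∀ q a, (A.δ q a).Subsingleton

end NFAwtl

/-- A repetitive NFAwtl (RNFAwtl): on the end-of-tape marker it may accept
(states in `Facc`) or change state via `δend` and continue. -/
structure RNFAwtl (Q α : Type) where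
  τ : Q → Set α
  I : Set Q
  δ : Q → α → Set Q
  δend : Q → Set Q
  Facc : Set Q
  tr : ∀ q a, a ∈ τ q → δ q a = ∅
  accEnd : ∀ q, q ∈ Facc → δend q = ∅

namespace RNFAwtl

variable {Q α : Type}

/-- One computation step of an RNFAwtl: either delete the leftmost
non-translucent letter, or, when all remaining letters are translucent,
change state via a `◁`-transition and continue. -/
def Step (A : RNFAwtl Q α) : Q × List α → Q × List α → Prop := fun c c' =>
  (∃ u a v, c.2 = u ++ a :: v ∧ (∀ x ∈ u, x ∈ A.τ c.1) ∧ a ∉ A.τ c.1 ∧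
    c'.1 ∈ A.δ c.1 a ∧ c'.2 = u ++ v)
  ∨ ((∀ x ∈ c.2, x ∈ A.τ c.1) ∧ c'.1 ∈ A.δend c.1 ∧ c'.2 = c.2)

def Accepts (A : RNFAwtl Q α) (w : List α) : Prop :=
  ∃ q₀ ∈ A.I, ∃ q w', Relation.ReflTransGen A.Step (q₀, w) (q, w') ∧
    (∀ x ∈ w', x ∈ A.τ q) ∧ q ∈ A.Facc

def lang (A : RNFAwtl Q α) : Set (List α) := { w | A.Accepts w }

/-- An RDFAwtl: single initial state and deterministic transitions. -/
def Deterministic (A : RNFAwtl Q α) : Prop :=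
  (∃ q₀, A.I = {q₀}) ∧ (∀ q a, (A.δ q a).Subsingleton) ∧ ∀ q, (A.δend q).Subsingleton

end RNFAwtl

/-- A non-returning repetitive NFAwtl (nr-NFAwtl): the head continues from the
position of the last deleted letter; on the end-of-tape marker it may change
state and return the head to the left end. -/
structure NrNFAwtl (Q α : Type) where
  τ : Q → Set α
  I : Set Q
  δ : Q → α → Set Q
  δend : Q → Set Q
  Facc : Set Q
  tr : ∀ q a, a ∈ τ q → δ q a = ∅
  accEnd : ∀ q, q ∈ Facc → δend q = ∅

namespace NrNFAwtl

variable {Q α : Type}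

/-- Configurations are `(x, q, w)`: `x` is the already-skipped prefix, the head
is on the first letter of `w`. -/
def Step (A : NrNFAwtl Q α) :
    List α × Q × List α → List α × Q × List α → Prop := fun c c' =>
  (∃ u a v, c.2.2 = u ++ a :: v ∧ (∀ x ∈ u, x ∈ A.τ c.2.1) ∧ a ∉ A.τ c.2.1 ∧
    c'.2.1 ∈ A.δ c.2.1 a ∧ c'.1 = c.1 ++ u ∧ c'.2.2 = v)
  ∨ ((∀ x ∈ c.2.2, x ∈ A.τ c.2.1) ∧ c'.2.1 ∈ A.δend c.2.1 ∧ c'.1 = [] ∧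
    c'.2.2 = c.1 ++ c.2.2)

def Accepts (A : NrNFAwtl Q α) (w : List α) : Prop :=
  ∃ q₀ ∈ A.I, ∃ x q w', Relation.ReflTransGen A.Step ([], q₀, w) (x, q, w') ∧
    (∀ y ∈ w', y ∈ A.τ q) ∧ q ∈ A.Facc

def lang (A : NrNFAwtl Q α) : Set (List α) := { w | A.Accepts w }

def Deterministic (A : NrNFAwtl Q α) : Prop :=
  (∃ q₀, A.I = {q₀}) ∧ (∀ q a, (A.δ q a).Subsingleton) ∧ ∀ q, (A.δend q).Subsingleton

end NrNFAwtl

/-- A non-repetitive non-returning NFAwtl (nr-nr-NFAwtl): non-returning, and it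
must halt as soon as all remaining letters to the right are translucent. -/
structure NrnrNFAwtl (Q α : Type) where
  τ : Q → Set α
  I : Set Q
  F : Set Q
  δ : Q → α → Set Q
  tr : ∀ q a, a ∈ τ q → δ q a = ∅

namespace NrnrNFAwtl

variable {Q α : Type}

def Step (A : NrnrNFAwtl Q α) :
    List α × Q × List α → List α × Q × List α → Prop := fun c c' =>
  ∃ u a v, c.2.2 = u ++ a :: v ∧ (∀ x ∈ u, x ∈ A.τ c.2.1) ∧ a ∉ A.τ c.2.1 ∧
    c'.2.1 ∈ A.δ c.2.1 a ∧ c'.1 = c.1 ++ u ∧ c'.2.2 = v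

def Accepts (A : NrnrNFAwtl Q α) (w : List α) : Prop :=
  ∃ q₀ ∈ A.I, ∃ x q w', Relation.ReflTransGen A.Step ([], q₀, w) (x, q, w') ∧
    (∀ y ∈ w', y ∈ A.τ q) ∧ q ∈ A.F

def lang (A : NrnrNFAwtl Q α) : Set (List α) := { w | A.Accepts w }

def Deterministic (A : NrnrNFAwtl Q α) : Prop :=
  (∃ q₀, A.I = {q₀}) ∧ ∀ q a, (A.δ q a).Subsingleton

end NrnrNFAwtl

/-- Language classes. -/
def NFAwtlLangs (α : Type) [Fintype α] : Set (Set (List α)) :=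
  { L | ∃ (Q : Type) (_ : Fintype Q) (A : NFAwtl Q α), A.lang = L }

def DFAwtlLangs (α : Type) [Fintype α] : Set (Set (List α)) :=
  { L | ∃ (Q : Type) (_ : Fintype Q) (A : NFAwtl Q α), A.Deterministic ∧ A.lang = L }

def RNFAwtlLangs (α : Type) [Fintype α] : Set (Set (List α)) :=
  { L | ∃ (Q : Type) (_ : Fintype Q) (A : RNFAwtl Q α), A.lang = L }

def RDFAwtlLangs (α : Type) [Fintype α] : Set (Set (List α)) :=
  { L | ∃ (Q : Type) (_ : Fintype Q) (A : RNFAwtl Q α), A.Deterministic ∧ A.lang = L }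

def NrNFAwtlLangs (α : Type) [Fintype α] : Set (Set (List α)) :=
  { L | ∃ (Q : Type) (_ : Fintype Q) (A : NrNFAwtl Q α), A.lang = L }

def NrDFAwtlLangs (α : Type) [Fintype α] : Set (Set (List α)) :=
  { L | ∃ (Q : Type) (_ : Fintype Q) (A : NrNFAwtl Q α), A.Deterministic ∧ A.lang = L }

def NrnrNFAwtlLangs (α : Type) [Fintype α] : Set (Set (List α)) :=
  { L | ∃ (Q : Type) (_ : Fintype Q) (A : NrnrNFAwtl Q α), A.lang = L }

def NrnrDFAwtlLangs (α : Type) [Fintype α] : Set (Set (List α)) :=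
  { L | ∃ (Q : Type) (_ : Fintype Q) (A : NrnrNFAwtl Q α), A.Deterministic ∧ A.lang = L }

/-- The two-letter alphabet {a, b}. -/
inductive AB : Type
  | a | b
deriving DecidableEq

instance : Fintype AB := ⟨{AB.a, AB.b}, fun x => by cases x <;> simp⟩

/-- The language L₂ = { aⁿbⁿ : n ≥ 0 }. -/
def L2 : Set (List AB) :=
  { w | ∃ n, w = List.replicate n AB.a ++ List.replicate n AB.b }

/-!
Let an RNFAwtl with `N` states accept `aⁿbⁿ`, `n > N`. On a tape `aⁱbʲ` a step either deletes the
first `a`, or deletes the first `b` (if `a` is translucent or no `a` is left), or is an end-of-tape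
transition, so up to its first deletion of a `b` the accepting run is a run on the pairs
`(state, i)`, and it yields an accepted word outside `L₂`:
* if it never deletes a `b`, then `b` was translucent at every end-of-tape transition, and the same
  run accepts `aⁿbⁿ⁺¹`;
* if the first `b` is deleted after all the `a`s, a state repeats among the `n + 1` levels `i`, and
  cutting out the loop accepts `aᵐbⁿ` with `m < n`;
* otherwise the first `b` is deleted while `a` is translucent and some `a` is left, and the run
  works as well on `aⁿ⁻¹ b a bⁿ⁻¹`.
-/
open List Relation

def abWord (i j : ℕ) : List AB := replicate i AB.a ++ replicate j AB.b

lemma forall_mem_abWord_iff {i j : ℕ} {S : Set AB} :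
    (∀ x ∈ abWord i j, x ∈ S) ↔ (i = 0 ∨ AB.a ∈ S) ∧ (j = 0 ∨ AB.b ∈ S) := by
  simp only [abWord, mem_append, mem_replicate]
  constructor
  · intro h
    exact ⟨or_iff_not_imp_left.2 fun hi => h _ (.inl ⟨hi, rfl⟩),
      or_iff_not_imp_left.2 fun hj => h _ (.inr ⟨hj, rfl⟩)⟩
  · rintro ⟨ha, hb⟩ x (⟨hi, rfl⟩ | ⟨hj, rfl⟩)
    exacts [ha.resolve_left hi, hb.resolve_left hj]

lemma abWord_eq_append_cons {i j : ℕ} {u v : List AB} {x : AB} (h : abWord i j = u ++ x :: v) :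
    (∃ k < i, u = replicate k AB.a ∧ x = AB.a ∧ v = abWord (i - k - 1) j) ∨
    (∃ k < j, u = replicate i AB.a ++ replicate k AB.b ∧ x = AB.b ∧
      v = replicate (j - k - 1) AB.b) := by
  rcases append_eq_append_iff.1 h with ⟨c, rfl, hc⟩ | ⟨c, hc, hxv⟩
  · obtain ⟨hlen, hc, hxv⟩ := replicate_eq_append_iff.1 hc
    simp only [length_cons, replicate_succ, cons.injEq] at hxv hlen
    exact Or.inr ⟨c.length, by omega, by rw [← hc], hxv.1, by rw [hxv.2]; congr 1; omega⟩
  · obtain ⟨hlen, hu, hc⟩ := replicate_eq_append_iff.1 hc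
    rcases c with _ | ⟨y, c⟩
    · simp only [length_nil, add_zero, nil_append] at hlen hxv
      rcases j with _ | j
      · simp at hxv
      · simp only [replicate_succ, cons.injEq] at hxv
        exact Or.inr ⟨0, by omega, by rw [hu, hlen]; simp, hxv.1, by rw [hxv.2]; simp⟩
    · simp only [length_cons, replicate_succ, cons.injEq, cons_append] at hlen hc hxv
      refine Or.inl ⟨u.length, by omega, hu, hxv.1.trans hc.1, ?_⟩
      rw [hxv.2, hc.2, abWord]; congr 2; omega

lemma count_abWord (i j : ℕ) : (abWord i j).count AB.a = i ∧ (abWord i j).count AB.b = j := by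
  simp [abWord, count_replicate]

lemma abWord_mem_L2_iff {i j : ℕ} : abWord i j ∈ L2 ↔ i = j := by
  refine ⟨fun ⟨n, hn⟩ => ?_, fun h => ⟨i, h ▸ rfl⟩⟩
  have h₁ := count_abWord i j
  rw [hn] at h₁
  have h₂ := count_abWord n n
  unfold abWord at h₂
  omega

def swapWord (i j : ℕ) : List AB := replicate i AB.a ++ AB.b :: AB.a :: replicate j AB.b

lemma swapWord_not_mem_L2 (i j : ℕ) : swapWord i j ∉ L2 := by
  rintro ⟨n, hn⟩
  have hb : (swapWord i j)[i]? = some AB.b := by simp [swapWord]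
  have ha : (swapWord i j)[i + 1]? = some AB.a := by simp [swapWord]
  simp only [hn, getElem?_append, getElem?_replicate, length_replicate] at hb ha
  split_ifs at hb ha <;> simp_all
  omega

namespace RNFAwtl

section General

variable {Q α : Type} {A : RNFAwtl Q α}

variable (A) in
def AcceptsFrom (c : Q × List α) : Prop :=
  ∃ q w', ReflTransGen A.Step c (q, w') ∧ (∀ x ∈ w', x ∈ A.τ q) ∧ q ∈ A.Facc

lemma accepts_iff {w : List α} : A.Accepts w ↔ ∃ q₀ ∈ A.I, A.AcceptsFrom (q₀, w) := Iff.rfl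

lemma AcceptsFrom.of_run {c c' : Q × List α} (h : ReflTransGen A.Step c c')
    (h' : A.AcceptsFrom c') : A.AcceptsFrom c :=
  let ⟨q, w', hrun, htr, hF⟩ := h'
  ⟨q, w', h.trans hrun, htr, hF⟩

lemma AcceptsFrom.head {c c' : Q × List α} (h : A.Step c c') (h' : A.AcceptsFrom c') :
    A.AcceptsFrom c :=
  .of_run (.single h) h'

/-- `inl q` simulates `q`; after a deletion the head is parked in `inr q'`, for which every letter
is translucent, so it moves on to the end-of-tape marker and returns to the left end in `inl q'`. -/
def toNr (A : RNFAwtl Q α) : NrNFAwtl (Q ⊕ Q) α where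
  τ := Sum.elim A.τ fun _ => Set.univ
  I := Sum.inl '' A.I
  δ := Sum.elim (fun q x => Sum.inr '' A.δ q x) fun _ _ => ∅
  δend := Sum.elim (fun q => Sum.inl '' A.δend q) fun q => {Sum.inl q}
  Facc := Sum.inl '' A.Facc
  tr := by
    rintro (q | q) x hx
    · simp [A.tr q x hx]
    · rfl
  accEnd := by
    rintro (q | q) ⟨q', hq', hq⟩
    · cases hq
      simp [A.accEnd q hq']
    · cases hq

lemma toNr_run_of_step {c c' : Q × List α} (h : A.Step c c') :
    ReflTransGen A.toNr.Step ([], .inl c.1, c.2) ([], .inl c'.1, c'.2) := by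
  rcases h with ⟨u, x, v, he, hu, hx, hδ, hw⟩ | ⟨hall, hδ, hw⟩
  · have hdel : A.toNr.Step ([], .inl c.1, c.2) (u, .inr c'.1, v) :=
      .inl ⟨u, x, v, he, hu, hx, ⟨c'.1, hδ, rfl⟩, rfl, rfl⟩
    have hret : A.toNr.Step (u, .inr c'.1, v) ([], .inl c'.1, c'.2) :=
      .inr ⟨fun _ _ => trivial, rfl, rfl, hw⟩
    exact .tail (.single hdel) hret
  · exact .single (.inr ⟨hall, ⟨c'.1, hδ, rfl⟩, rfl, hw⟩)

lemma toNr_run_of_run {c c' : Q × List α} (h : ReflTransGen A.Step c c') :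
    ReflTransGen A.toNr.Step ([], .inl c.1, c.2) ([], .inl c'.1, c'.2) :=
  ReflTransGen.lift' (fun c : Q × List α => (([] : List α), Sum.inl c.1, c.2))
    (fun _ _ => toNr_run_of_step) _ _ h

variable (A) in
def ToNrInv (q₀ : Q) (w : List α) : List α × (Q ⊕ Q) × List α → Prop
  | (x, .inl q, v) => x = [] ∧ ReflTransGen A.Step (q₀, w) (q, v)
  | (x, .inr q, v) => ReflTransGen A.Step (q₀, w) (q, x ++ v)

lemma ToNrInv.step {q₀ : Q} {w : List α} {c c'} (hc : A.ToNrInv q₀ w c)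
    (h : A.toNr.Step c c') : A.ToNrInv q₀ w c' := by
  obtain ⟨x, s, v⟩ := c
  obtain ⟨x', s', v'⟩ := c'
  rcases s with q | q
  · obtain ⟨rfl, hr⟩ := hc
    rcases h with ⟨_, y, _, rfl, hu, hy, ⟨q', hq', rfl⟩, rfl, rfl⟩ |
      ⟨hall, ⟨q', hq', rfl⟩, rfl, rfl⟩
    · exact hr.tail (.inl ⟨x', y, v', rfl, hu, hy, hq', rfl⟩)
    · exact ⟨rfl, hr.tail (.inr ⟨hall, hq', rfl⟩)⟩
  · rcases h with ⟨_, _, _, -, -, -, hδ, -⟩ | ⟨-, rfl, rfl, rfl⟩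
    · exact hδ.elim
    · exact ⟨rfl, hc⟩

theorem toNr_lang (A : RNFAwtl Q α) : A.toNr.lang = A.lang := by
  ext w
  constructor
  · rintro ⟨_, ⟨q₀, hq₀, rfl⟩, x, _, w', hrun, htr, ⟨q, hq, rfl⟩⟩
    have hinv : ∀ c, ReflTransGen A.toNr.Step ([], .inl q₀, w) c → A.ToNrInv q₀ w c := by
      intro c h
      induction h with
      | refl => exact ⟨rfl, .refl⟩
      | tail _ h ih => exact ih.step h
    exact ⟨q₀, hq₀, q, w', (hinv _ hrun).2, htr, hq⟩
  · rintro ⟨q₀, hq₀, q, w', hrun, htr, hq⟩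
    exact ⟨.inl q₀, ⟨q₀, hq₀, rfl⟩, [], .inl q, w', toNr_run_of_run hrun, htr, ⟨q, hq, rfl⟩⟩

lemma Deterministic.toNr (hA : A.Deterministic) : A.toNr.Deterministic := by
  obtain ⟨⟨q₀, hq₀⟩, hδ, hδend⟩ := hA
  refine ⟨⟨.inl q₀, by simp [RNFAwtl.toNr, hq₀]⟩, ?_, ?_⟩
  · rintro (q | q) x
    exacts [(hδ q x).image _, Set.subsingleton_empty]
  · rintro (q | q)
    exacts [(hδend q).image _, Set.subsingleton_singleton]

end General

variable {Q : Type} {A : RNFAwtl Q AB}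

variable (A) in
/-- The steps of `A` on the tape `aⁱbʲ` that delete no `b`, on the configurations `(q, i)`. -/
inductive AStep (j : ℕ) : Q × ℕ → Q × ℕ → Prop
  | readA {q q' i} : AB.a ∉ A.τ q → q' ∈ A.δ q AB.a → AStep j (q, i + 1) (q', i)
  | endMarker {q q' i} : (i = 0 ∨ AB.a ∈ A.τ q) → (j = 0 ∨ AB.b ∈ A.τ q) → q' ∈ A.δend q →
      AStep j (q, i) (q', i)

namespace AStep

variable {j : ℕ}

lemma step {c c' : Q × ℕ} (h : A.AStep j c c') :
    A.Step (c.1, abWord c.2 j) (c'.1, abWord c'.2 j) := by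
  cases h with
  | readA ha hδ => exact .inl ⟨[], AB.a, _, rfl, by simp, ha, hδ, rfl⟩
  | endMarker ha hb hδ => exact .inr ⟨forall_mem_abWord_iff.2 ⟨ha, hb⟩, hδ, rfl⟩

lemma run {c c' : Q × ℕ} (h : ReflTransGen (A.AStep j) c c') :
    ReflTransGen A.Step (c.1, abWord c.2 j) (c'.1, abWord c'.2 j) :=
  ReflTransGen.lift (fun c : Q × ℕ => (c.1, abWord c.2 j)) (fun _ _ => step) _ _ h

lemma of_ne_zero {j' : ℕ} (hj : j ≠ 0) {c c' : Q × ℕ} (h : A.AStep j c c') :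
    A.AStep j' c c' := by
  cases h with
  | readA ha hδ => exact .readA ha hδ
  | endMarker ha hb hδ => exact .endMarker ha (.inr (hb.resolve_left hj)) hδ

lemma snd_le_succ {c c' : Q × ℕ} (h : A.AStep j c c') : c'.2 ≤ c.2 ∧ c.2 ≤ c'.2 + 1 := by
  cases h <;> omega

lemma run_snd_le {c c' : Q × ℕ} (h : ReflTransGen (A.AStep j) c c') : c'.2 ≤ c.2 := by
  induction h with
  | refl => rfl
  | tail _ h ih => exact (snd_le_succ h).1.trans ih

lemma sub {d : ℕ} {c c' : Q × ℕ} (h : A.AStep j c c') (hd : d ≤ c'.2) :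
    A.AStep j (c.1, c.2 - d) (c'.1, c'.2 - d) := by
  cases h with
  | @readA q q' i ha hδ =>
    rw [show i + 1 - d = i - d + 1 by omega]
    exact .readA ha hδ
  | endMarker ha hb hδ => exact .endMarker (ha.imp_left (by omega)) hb hδ

lemma run_sub {d i : ℕ} {p : Q} {c : Q × ℕ} (h : ReflTransGen (A.AStep j) c (p, i + d)) :
    ReflTransGen (A.AStep j) (c.1, c.2 - d) (p, i) := by
  induction h using ReflTransGen.head_induction_on with
  | refl => simpa using .refl
  | head h hrun ih => exact .head (h.sub ((run_snd_le hrun).trans' (by omega))) ih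

lemma exists_run_through {m : ℕ} {c c' : Q × ℕ} (h : ReflTransGen (A.AStep j) c c')
    (hm' : c'.2 ≤ m) (hm : m ≤ c.2) :
    ∃ r, ReflTransGen (A.AStep j) c (r, m) ∧ ReflTransGen (A.AStep j) (r, m) c' := by
  induction h using ReflTransGen.head_induction_on with
  | refl =>
    obtain rfl : m = c'.2 := le_antisymm hm hm'
    exact ⟨c'.1, .refl, .refl⟩
  | @head c c₂ h hrun ih =>
    rcases hm.eq_or_lt with rfl | hlt
    · exact ⟨c.1, .refl, .head h hrun⟩
    · obtain ⟨r, hr₁, hr₂⟩ := ih (by have := snd_le_succ h; omega)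
      exact ⟨r, .head h hr₁, hr₂⟩

lemma exists_run_lt [Finite Q] {i : ℕ} {q p : Q}
    (h : ReflTransGen (A.AStep j) (q, i) (p, 0)) (hi : Nat.card Q < i) :
    ∃ i' < i, ReflTransGen (A.AStep j) (q, i') (p, 0) := by
  have := Fintype.ofFinite Q
  choose r hr₁ hr₂ using fun m : Fin (i + 1) => exists_run_through h m.val.zero_le m.is_le
  obtain ⟨m₁, m₂, hne, heq⟩ := Fintype.exists_ne_map_eq_of_card_lt r
    (by rw [Fintype.card_fin, ← Nat.card_eq_fintype_card]; omega)
  wlog hlt : m₁ < m₂ generalizing m₁ m₂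
  · exact this m₂ m₁ hne.symm heq.symm (lt_of_le_of_ne (not_lt.1 hlt) hne.symm)
  -- the state `r m₁ = r m₂` repeats, so the a-reads between levels `m₂` and `m₁` can be cut out
  have hcut : ReflTransGen (A.AStep j) (q, i - (m₂ - m₁)) (r m₁, m₁) :=
    run_sub (c := (q, i)) (by rw [Nat.add_sub_cancel' hlt.le, heq]; exact hr₁ m₂)
  exact ⟨i - (m₂ - m₁), by omega, hcut.trans (hr₂ m₁)⟩

lemma step_swapWord {i i' : ℕ} {q q' : Q} (h : A.AStep (j + 1) (q, i + 1) (q', i' + 1)) :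
    A.Step (q, swapWord i j) (q', swapWord i' j) := by
  cases h with
  | readA ha hδ => exact .inl ⟨[], AB.a, swapWord i' j, rfl, by simp, ha, hδ, rfl⟩
  | endMarker ha hb hδ =>
    refine .inr ⟨fun x _ => ?_, hδ, rfl⟩
    cases x
    exacts [ha.resolve_left (by omega), hb.resolve_left (by omega)]

lemma run_swapWord {i₁ : ℕ} {p : Q} {c : Q × ℕ}
    (h : ReflTransGen (A.AStep (j + 1)) c (p, i₁ + 1)) :
    ReflTransGen A.Step (c.1, swapWord (c.2 - 1) j) (p, swapWord i₁ j) := by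
  induction h using ReflTransGen.head_induction_on with
  | refl => simpa using .refl
  | @head c c₂ h hrun ih =>
    obtain ⟨q, i⟩ := c
    obtain ⟨q₂, i₂⟩ := c₂
    have h₁ := run_snd_le hrun
    have h₂ := (snd_le_succ h).1
    dsimp only at h₁ h₂ ih ⊢
    obtain ⟨i₂, rfl⟩ : ∃ k, i₂ = k + 1 := ⟨i₂ - 1, by omega⟩
    obtain ⟨i, rfl⟩ : ∃ k, i = k + 1 := ⟨i - 1, by omega⟩
    exact .head (step_swapWord h) (by simpa using ih)

end AStep

lemma step_abWord {q : Q} {i j : ℕ} {c : Q × List AB} (h : A.Step (q, abWord i j) c) :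
    (∃ i', A.AStep j (q, i) (c.1, i') ∧ c.2 = abWord i' j) ∨
    ∃ j', j = j' + 1 ∧ (i = 0 ∨ AB.a ∈ A.τ q) ∧ AB.b ∉ A.τ q ∧ c.1 ∈ A.δ q AB.b ∧
      c.2 = abWord i j' := by
  obtain ⟨q', w'⟩ := c
  rcases h with ⟨u, x, v, he, hu, hx, hδ, rfl⟩ | ⟨hall, hδ, rfl⟩
  · rcases abWord_eq_append_cons he with ⟨k, hk, rfl, rfl, rfl⟩ | ⟨k, hk, rfl, rfl, rfl⟩
    · obtain rfl : k = 0 := by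
        by_contra h0
        exact hx (hu _ (mem_replicate.2 ⟨h0, rfl⟩))
      obtain ⟨i, rfl⟩ : ∃ i', i = i' + 1 := ⟨i - 1, by omega⟩
      exact .inl ⟨i, .readA hx hδ, by simp⟩
    · obtain rfl : k = 0 := by
        by_contra h0
        exact hx (hu _ (mem_append_right _ (mem_replicate.2 ⟨h0, rfl⟩)))
      obtain ⟨j, rfl⟩ : ∃ j', j = j' + 1 := ⟨j - 1, by omega⟩
      exact .inr ⟨j, rfl, (forall_mem_abWord_iff.1 hu).1, hx, hδ, by simp [abWord]⟩
  · obtain ⟨ha, hb⟩ := forall_mem_abWord_iff.1 hall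
    exact .inl ⟨i, .endMarker ha hb hδ, rfl⟩

lemma AcceptsFrom.abWord_cases {q : Q} {i j : ℕ} (h : A.AcceptsFrom (q, abWord i j)) :
    (∃ q' i', ReflTransGen (A.AStep j) (q, i) (q', i') ∧
      (∀ x ∈ abWord i' j, x ∈ A.τ q') ∧ q' ∈ A.Facc) ∨
    ∃ p i₁ p' j', j = j' + 1 ∧ ReflTransGen (A.AStep j) (q, i) (p, i₁) ∧
      (i₁ = 0 ∨ AB.a ∈ A.τ p) ∧ AB.b ∉ A.τ p ∧ p' ∈ A.δ p AB.b ∧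
      A.AcceptsFrom (p', abWord i₁ j') := by
  obtain ⟨qf, wf, hrun, htr, hF⟩ := h
  generalize hc : (q, abWord i j) = c at hrun
  induction hrun using ReflTransGen.head_induction_on generalizing q i with
  | refl =>
    cases hc
    exact .inl ⟨qf, i, .refl, htr, hF⟩
  | @head c c₂ hstep hrest ih =>
    subst hc
    rcases step_abWord hstep with ⟨i', hA, he⟩ | ⟨j', rfl, ha, hb, hδ, he⟩
    · rcases ih (Prod.ext rfl he.symm) with ⟨q', i'', hrun, htr, hF⟩ |
        ⟨p, i₁, p', j', hj, hrun, ha, hb, hδ, hacc⟩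
      · exact .inl ⟨q', i'', .head hA hrun, htr, hF⟩
      · exact .inr ⟨p, i₁, p', j', hj, .head hA hrun, ha, hb, hδ, hacc⟩
    · exact .inr ⟨q, i, c₂.1, j', rfl, .refl, ha, hb, hδ, qf, wf, he ▸ hrest, htr, hF⟩

lemma acceptsFrom_abWord_succ_right {q q' : Q} {i i' j : ℕ} (hj : j ≠ 0)
    (h : ReflTransGen (A.AStep j) (q, i) (q', i'))
    (htr : ∀ x ∈ abWord i' j, x ∈ A.τ q') (hF : q' ∈ A.Facc) :
    A.AcceptsFrom (q, abWord i (j + 1)) :=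
  ⟨q', abWord i' (j + 1),
    AStep.run (ReflTransGen.mono (fun _ _ => AStep.of_ne_zero hj) _ _ h),
    forall_mem_abWord_iff.2 ((forall_mem_abWord_iff.1 htr).imp_right fun hb =>
      .inr (hb.resolve_left hj)), hF⟩

lemma exists_acceptsFrom_abWord_lt [Finite Q] {q p : Q} {i j : ℕ}
    (h : ReflTransGen (A.AStep j) (q, i) (p, 0)) (hi : Nat.card Q < i)
    (hacc : A.AcceptsFrom (p, abWord 0 j)) : ∃ i' < i, A.AcceptsFrom (q, abWord i' j) :=
  let ⟨i', hi', h'⟩ := AStep.exists_run_lt h hi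
  ⟨i', hi', hacc.of_run (AStep.run h')⟩

lemma acceptsFrom_swapWord {q p p' : Q} {i i₁ j : ℕ}
    (h : ReflTransGen (A.AStep (j + 1)) (q, i + 1) (p, i₁ + 1))
    (ha : AB.a ∈ A.τ p) (hb : AB.b ∉ A.τ p) (hδ : p' ∈ A.δ p AB.b)
    (hacc : A.AcceptsFrom (p', abWord (i₁ + 1) j)) : A.AcceptsFrom (q, swapWord i j) := by
  have hread : A.Step (p, swapWord i₁ j) (p', abWord (i₁ + 1) j) :=
    .inl ⟨replicate i₁ AB.a, AB.b, AB.a :: replicate j AB.b, rfl,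
      fun x hx => (eq_of_mem_replicate hx) ▸ ha, hb, hδ, by simp [abWord, replicate_succ']⟩
  exact (hacc.head hread).of_run (by simpa using AStep.run_swapWord h)

theorem exists_acceptsFrom_not_mem_L2 [Finite Q] {q : Q} {n : ℕ} (hn : Nat.card Q < n)
    (h : A.AcceptsFrom (q, abWord n n)) : ∃ w ∉ L2, A.AcceptsFrom (q, w) := by
  rcases h.abWord_cases with ⟨q', i', hrun, htr, hF⟩ | ⟨p, i₁, p', j, rfl, hrun, ha, hb, hδ, hacc⟩
  · exact ⟨abWord n (n + 1), by simp [abWord_mem_L2_iff],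
      acceptsFrom_abWord_succ_right (by omega) hrun htr hF⟩
  · rcases i₁ with _ | i₁
    · have hread : A.Step (p, abWord 0 (j + 1)) (p', abWord 0 j) :=
        .inl ⟨[], AB.b, replicate j AB.b, rfl, by simp, hb, hδ, rfl⟩
      obtain ⟨i', hi', h'⟩ := exists_acceptsFrom_abWord_lt hrun hn (hacc.head hread)
      exact ⟨abWord i' (j + 1), by rw [abWord_mem_L2_iff]; omega, h'⟩
    · exact ⟨swapWord j j, swapWord_not_mem_L2 j j,
        acceptsFrom_swapWord hrun (ha.resolve_left (by omega)) hb hδ hacc⟩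

theorem lang_ne_L2 [Finite Q] (A : RNFAwtl Q AB) : A.lang ≠ L2 := by
  intro hL
  have hmem : ∀ w, A.Accepts w ↔ w ∈ L2 := fun w => hL ▸ Iff.rfl
  obtain ⟨q₀, hq₀, hacc⟩ := accepts_iff.1 ((hmem _).2 (abWord_mem_L2_iff.2 rfl))
  obtain ⟨w, hw, hacc'⟩ := exists_acceptsFrom_not_mem_L2 (Nat.lt_succ_self (Nat.card Q)) hacc
  exact hw ((hmem w).1 (accepts_iff.2 ⟨q₀, hq₀, hacc'⟩))

end RNFAwtl

def NFAwtl.toRNFAwtl {Q α : Type} (A : NFAwtl Q α) : RNFAwtl Q α :=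
  ⟨A.τ, A.I, A.δ, fun _ => ∅, A.F, A.tr, fun _ _ => rfl⟩

lemma NFAwtl.toRNFAwtl_step {Q α : Type} (A : NFAwtl Q α) : A.toRNFAwtl.Step = A.Step := by
  ext c c'
  exact or_iff_left fun ⟨_, h, _⟩ => h

lemma NFAwtl.toRNFAwtl_lang {Q α : Type} (A : NFAwtl Q α) : A.toRNFAwtl.lang = A.lang := by
  simp only [RNFAwtl.lang, RNFAwtl.Accepts, toRNFAwtl_step]
  rfl

inductive L2State : Type
  | readA | readB | rewind
deriving DecidableEq

instance : Fintype L2State := ⟨{.readA, .readB, .rewind}, fun x => by cases x <;> simp⟩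

/-- Each round deletes the first `a`, then the first `b` (skipping `a`s), then skips the remaining
`b`s to the end-of-tape marker and returns to the left end. -/
def l2Automaton : NrNFAwtl L2State AB where
  τ
    | .readA => ∅
    | .readB => {AB.a}
    | .rewind => {AB.b}
  I := {.readA}
  δ
    | .readA, .a => {.readB}
    | .readB, .b => {.rewind}
    | _, _ => ∅
  δend
    | .rewind => {.readA}
    | _ => ∅
  Facc := {.readA}
  tr := by rintro (_ | _ | _) (_ | _) h <;> simp_all
  accEnd := by rintro (_ | _ | _) h <;> simp_all

lemma l2Automaton_deterministic : l2Automaton.Deterministic :=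
  ⟨⟨.readA, rfl⟩, by rintro (_ | _ | _) (_ | _) <;> simp [l2Automaton],
    by rintro (_ | _ | _) <;> simp [l2Automaton]⟩

lemma l2Automaton_run_round (n : ℕ) :
    ReflTransGen l2Automaton.Step ([], .readA, abWord (n + 1) (n + 1))
      ([], .readA, abWord n n) := by
  have hreadA : l2Automaton.Step ([], .readA, abWord (n + 1) (n + 1))
      ([], .readB, abWord n (n + 1)) :=
    .inl ⟨[], .a, abWord n (n + 1), rfl, by simp, Set.notMem_empty _, rfl, rfl, rfl⟩
  have hreadB : l2Automaton.Step ([], .readB, abWord n (n + 1))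
      (replicate n AB.a, .rewind, replicate n AB.b) :=
    .inl ⟨replicate n AB.a, .b, replicate n AB.b, rfl, fun _ => eq_of_mem_replicate,
      by simp [l2Automaton], rfl, rfl, rfl⟩
  have hrewind : l2Automaton.Step (replicate n AB.a, .rewind, replicate n AB.b)
      ([], .readA, abWord n n) :=
    .inr ⟨fun _ => eq_of_mem_replicate, rfl, rfl, rfl⟩
  exact .tail (.tail (.single hreadA) hreadB) hrewind

lemma l2Automaton_accepts_abWord (n : ℕ) : l2Automaton.Accepts (abWord n n) := by
  refine ⟨.readA, rfl, [], .readA, [], ?_, by simp, rfl⟩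
  induction n with
  | zero => exact .refl
  | succ n ih => exact (l2Automaton_run_round n).trans ih

/-- Putting back the letters deleted in the current round gives a word that is in `L2` iff `w` is. -/
def L2Inv (w : List AB) : List AB × L2State × List AB → Prop
  | (x, .readA, v) => x = [] ∧ (v ∈ L2 ↔ w ∈ L2)
  | (x, .readB, v) => x = [] ∧ (AB.a :: v ∈ L2 ↔ w ∈ L2)
  | (x, .rewind, v) => (∀ y ∈ x, y = AB.a) ∧ (AB.a :: (x ++ AB.b :: v) ∈ L2 ↔ w ∈ L2)

lemma L2Inv.step {w : List AB} {c c'} (hc : L2Inv w c) (h : l2Automaton.Step c c') :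
    L2Inv w c' := by
  obtain ⟨x, s, v⟩ := c
  obtain ⟨x', s', v'⟩ := c'
  rcases s with _ | _ | _
  · obtain ⟨rfl, hv⟩ := hc
    rcases h with ⟨_, y, _, rfl, hu, -, hδ, rfl, rfl⟩ | ⟨-, hδ, -⟩
    · obtain rfl : x' = [] := eq_nil_iff_forall_not_mem.2 hu
      cases y
      · obtain rfl := hδ
        exact ⟨rfl, hv⟩
      · exact hδ.elim
    · exact hδ.elim
  · obtain ⟨rfl, hv⟩ := hc
    rcases h with ⟨_, y, _, rfl, hu, hy, hδ, rfl, rfl⟩ | ⟨-, hδ, -⟩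
    · cases y
      · exact absurd rfl hy
      · obtain rfl := hδ
        exact ⟨hu, hv⟩
    · exact hδ.elim
  · obtain ⟨hx, hv⟩ := hc
    rcases h with ⟨_, y, _, -, -, hy, hδ, -⟩ | ⟨hall, hδ, rfl, rfl⟩
    · cases y
      · exact hδ.elim
      · exact absurd rfl hy
    · obtain rfl := hδ
      obtain ⟨k, rfl⟩ : ∃ k, x = replicate k AB.a := ⟨_, eq_replicate_iff.2 ⟨rfl, hx⟩⟩
      obtain ⟨m, rfl⟩ : ∃ m, v = replicate m AB.b := ⟨_, eq_replicate_iff.2 ⟨rfl, hall⟩⟩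
      have hshift : abWord (k + 1) (m + 1) ∈ L2 ↔ abWord k m ∈ L2 := by simp [abWord_mem_L2_iff]
      exact ⟨rfl, hshift.symm.trans hv⟩

theorem l2Automaton_lang : l2Automaton.lang = L2 := by
  ext w
  constructor
  · rintro ⟨_, rfl, x, _, w', hrun, htr, rfl⟩
    have hinv : ∀ c, ReflTransGen l2Automaton.Step ([], .readA, w) c → L2Inv w c := by
      intro c h
      induction h with
      | refl => exact ⟨rfl, Iff.rfl⟩
      | tail _ h ih => exact ih.step h
    obtain rfl : w' = [] := eq_nil_iff_forall_not_mem.2 htr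
    exact (hinv _ hrun).2.1 ⟨0, rfl⟩
  · rintro ⟨n, rfl⟩
    exact l2Automaton_accepts_abWord n

lemma L2_mem_NrDFAwtlLangs : L2 ∈ NrDFAwtlLangs AB :=
  ⟨L2State, inferInstance, l2Automaton, l2Automaton_deterministic, l2Automaton_lang⟩

lemma L2_not_mem_RNFAwtlLangs : L2 ∉ RNFAwtlLangs AB :=
  fun ⟨_, _, A, hA⟩ => A.lang_ne_L2 hA

lemma NFAwtlLangs_subset_RNFAwtlLangs (α : Type) [Fintype α] :
    NFAwtlLangs α ⊆ RNFAwtlLangs α :=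
  fun _ ⟨Q, hQ, A, hA⟩ => ⟨Q, hQ, A.toRNFAwtl, A.toRNFAwtl_lang.trans hA⟩

lemma RDFAwtlLangs_subset_RNFAwtlLangs (α : Type) [Fintype α] :
    RDFAwtlLangs α ⊆ RNFAwtlLangs α :=
  fun _ ⟨Q, hQ, A, _, hA⟩ => ⟨Q, hQ, A, hA⟩

lemma RDFAwtlLangs_subset_NrDFAwtlLangs (α : Type) [Fintype α] :
    RDFAwtlLangs α ⊆ NrDFAwtlLangs α := by
  rintro _ ⟨Q, hQ, A, hA, rfl⟩
  exact ⟨Q ⊕ Q, inferInstance, A.toNr, hA.toNr, A.toNr_lang⟩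

/-- ℒ(RDFAwtl) ⊊ ℒ(nr-DFAwtl); the witness L₂ = {aⁿbⁿ} is
accepted by an nr-DFAwtl but by no NFAwtl, hence by no RDFAwtl. -/
theorem RDFAwtl_ssubset_nrDFAwtl :
    L2 ∈ NrDFAwtlLangs AB ∧ L2 ∉ NFAwtlLangs AB ∧ L2 ∉ RDFAwtlLangs AB ∧
    RDFAwtlLangs AB ⊂ NrDFAwtlLangs AB := by
  have hNFA : L2 ∉ NFAwtlLangs AB := fun h =>
    L2_not_mem_RNFAwtlLangs (NFAwtlLangs_subset_RNFAwtlLangs AB h)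
  have hRDFA : L2 ∉ RDFAwtlLangs AB := fun h =>
    L2_not_mem_RNFAwtlLangs (RDFAwtlLangs_subset_RNFAwtlLangs AB h)
  exact ⟨L2_mem_NrDFAwtlLangs, hNFA, hRDFA, RDFAwtlLangs_subset_NrDFAwtlLangs AB,
    fun h => hRDFA (h L2_mem_NrDFAwtlLangs)⟩
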